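/- In Choi's reduction with δ > ω > 0, a k-CNF formula f with n clauses is satisfiable if and only if the minimum QUBO value equals −n·ω, attained by selecting exactly one true, conflict-free literal from each clause. -/
import Mathlib


noncomputable section

/-- Numeric value of a binary variable. -/
def ind (b : Bool) : ℝ := if b then 1 else 0

/-- Choi's QUBO for a `k`-CNF formula with `n` clauses. The formula `f` gives,
for clause `i` and position `j`, the pair (variable, polarity). The binary
variables `l i j` select literal occurrences. Penalties: `δ` on pairs of
occurrences in the same clause and on conflicting pairs (same variable,
opposite polarity, in different clauses), weight `-ω` on each occurrence. -/
def choiQUBO {V : Type*} [DecidableEq V] (n k : ℕ) (f : Fin n → Fin k → V × Bool)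
    (ω δ : ℝ) (l : Fin n → Fin k → Bool) : ℝ :=
  -ω * ∑ i, ∑ j, ind (l i j)
  + δ * ∑ i, ∑ j, ∑ j', (if j < j' then ind (l i j) * ind (l i j') else 0)
  + δ * ∑ i, ∑ j, ∑ i', ∑ j',
      (if i < i' ∧ (f i j).1 = (f i' j').1 ∧ (f i j).2 ≠ (f i' j').2
       then ind (l i j) * ind (l i' j') else 0)

/-- A truth assignment satisfies the formula: every clause contains a true literal. -/
def Satisfies {V : Type*} {n k : ℕ} (f : Fin n → Fin k → V × Bool) (x : V → Bool) : Prop :=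
  ∀ i, ∃ j, x (f i j).1 = (f i j).2

lemma ind_nonneg (b : Bool) : 0 ≤ ind b := by
  cases b <;> simp [ind]

lemma ind_mul_self (b : Bool) : ind b * ind b = ind b := by
  cases b <;> simp [ind]

/-- Per-clause lower bound. -/
lemma clause_lb {k : ℕ} (a : Fin k → Bool) (ω δ : ℝ) (hω : 0 < ω) (hδ : ω < δ) :
    -ω ≤ -ω * (∑ j, ind (a j))
            + δ * ∑ j, ∑ j', (if j < j' then ind (a j) * ind (a j') else 0) := by
  set s : ℝ := ∑ j, ind (a j) with hs
  set p : ℝ := ∑ j, ∑ j', (if j < j' then ind (a j) * ind (a j') else 0) with hp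
  have key : ∀ j j' : Fin k,
      (if j < j' then ind (a j) * ind (a j') else 0)
      + (if j' < j then ind (a j) * ind (a j') else 0)
      + (if j = j' then ind (a j) * ind (a j') else 0)
      = ind (a j) * ind (a j') := by
    intro j j'
    rcases lt_trichotomy j j' with h | h | h
    · simp [h, asymm h, h.ne]
    · simp [h]
    · simp [h, asymm h, h.ne']
  have hsum : p + p + s = s * s := by
    have h1 : ∑ j, ∑ j', (if j' < j then ind (a j) * ind (a j') else 0) = p := by
      rw [Finset.sum_comm, hp]
      refine Finset.sum_congr rfl fun j _ => Finset.sum_congr rfl fun j' _ => ?_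
      rw [mul_comm]
    have h2 : ∑ j : Fin k, ∑ j', (if j = j' then ind (a j) * ind (a j') else 0) = s := by
      rw [hs]
      refine Finset.sum_congr rfl fun j _ => ?_
      rw [Finset.sum_ite_eq (Finset.univ) j (fun j' => ind (a j) * ind (a j'))]
      simp [ind_mul_self]
    have h3 : s * s = ∑ j, ∑ j', ind (a j) * ind (a j') := by
      rw [hs, Finset.sum_mul_sum]
    rw [h3]
    calc p + p + s
        = (∑ j, ∑ j', (if j < j' then ind (a j) * ind (a j') else 0))
          + (∑ j, ∑ j', (if j' < j then ind (a j) * ind (a j') else 0))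
          + (∑ j : Fin k, ∑ j', (if j = j' then ind (a j) * ind (a j') else 0)) := by
            rw [h1, h2, hp]
      _ = ∑ j, ∑ j', ind (a j) * ind (a j') := by
            rw [← Finset.sum_add_distrib, ← Finset.sum_add_distrib]
            refine Finset.sum_congr rfl fun j _ => ?_
            rw [← Finset.sum_add_distrib, ← Finset.sum_add_distrib]
            exact Finset.sum_congr rfl fun j' _ => key j j'
  obtain ⟨m, hm⟩ : ∃ m : ℕ, s = (m : ℝ) := by
    refine ⟨(Finset.univ.filter (fun j => a j = true)).card, ?_⟩
    rw [hs]
    rw [← Finset.sum_boole]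
    refine Finset.sum_congr rfl fun j _ => ?_
    cases h : a j <;> simp [ind, h]
  have hp' : p = (s * s - s) / 2 := by linarith
  rw [hp', hm]
  match m with
  | 0 => norm_num; linarith
  | 1 => norm_num
  | (m + 2) =>
      have h2 : (2 : ℝ) ≤ ((m + 2 : ℕ) : ℝ) := by push_cast; linarith [Nat.cast_nonneg (α := ℝ) m]
      set t : ℝ := ((m + 2 : ℕ) : ℝ)
      nlinarith [mul_nonneg (sub_nonneg.mpr hδ.le) (by linarith : (0:ℝ) ≤ t - 1),
        mul_nonneg hω.le (mul_nonneg (by linarith : (0:ℝ) ≤ t - 1) (by linarith : (0:ℝ) ≤ t - 2)),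
        mul_nonneg (mul_nonneg (sub_nonneg.mpr hδ.le) (by linarith : (0:ℝ) ≤ t - 1)) (by linarith : (0:ℝ) ≤ t - 2)]

lemma choi_lb {V : Type*} [DecidableEq V] (n k : ℕ) (f : Fin n → Fin k → V × Bool)
    (ω δ : ℝ) (hω : 0 < ω) (hδ : ω < δ) (l : Fin n → Fin k → Bool) :
    -(n : ℝ) * ω ≤ choiQUBO n k f ω δ l := by
  have hconf : 0 ≤ δ * ∑ i, ∑ j, ∑ i', ∑ j',
      (if i < i' ∧ (f i j).1 = (f i' j').1 ∧ (f i j).2 ≠ (f i' j').2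
       then ind (l i j) * ind (l i' j') else 0) := by
    apply mul_nonneg (by linarith)
    refine Finset.sum_nonneg fun i _ => Finset.sum_nonneg fun j _ =>
      Finset.sum_nonneg fun i' _ => Finset.sum_nonneg fun j' _ => ?_
    split
    · exact mul_nonneg (ind_nonneg _) (ind_nonneg _)
    · exact le_refl 0
  have hmain : -(n : ℝ) * ω ≤ -ω * ∑ i, ∑ j, ind (l i j)
      + δ * ∑ i, ∑ j, ∑ j', (if j < j' then ind (l i j) * ind (l i j') else 0) := by
    have hcl : ∀ i : Fin n, -ω ≤ -ω * (∑ j, ind (l i j))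
        + δ * ∑ j, ∑ j', (if j < j' then ind (l i j) * ind (l i j') else 0) :=
      fun i => clause_lb (l i) ω δ hω hδ
    calc -(n : ℝ) * ω = ∑ _i : Fin n, -ω := by simp
      _ ≤ ∑ i, (-ω * (∑ j, ind (l i j))
            + δ * ∑ j, ∑ j', (if j < j' then ind (l i j) * ind (l i j') else 0)) :=
          Finset.sum_le_sum fun i _ => hcl i
      _ = _ := by rw [Finset.sum_add_distrib, ← Finset.mul_sum, ← Finset.mul_sum]
  unfold choiQUBO
  linarith

lemma choi_val {V : Type*} [DecidableEq V] (n k : ℕ) (f : Fin n → Fin k → V × Bool)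
    (ω δ : ℝ) (l : Fin n → Fin k → Bool)
    (huniq : ∀ i, ∃! j, l i j = true)
    (hconf : ∀ i j i' j', l i j = true → l i' j' = true →
       (f i j).1 = (f i' j').1 → (f i j).2 ≠ (f i' j').2 → False) :
    choiQUBO n k f ω δ l = -(n : ℝ) * ω := by
  have h1 : ∑ i, ∑ j, ind (l i j) = (n : ℝ) := by
    have hone : ∀ i : Fin n, ∑ j, ind (l i j) = 1 := by
      intro i
      obtain ⟨j0, hj0, hun⟩ := huniq i
      have heach : ∀ j, ind (l i j) = if j = j0 then 1 else 0 := by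
        intro j
        by_cases h : j = j0
        · subst h; simp [ind, hj0]
        · have hf : l i j = false := by
            cases hli : l i j
            · rfl
            · exact absurd (hun j hli) h
          simp [ind, hf, h]
      simp [heach]
    simp [hone]
  have h2 : ∑ i, ∑ j, ∑ j', (if j < j' then ind (l i j) * ind (l i j') else 0) = (0:ℝ) := by
    refine Finset.sum_eq_zero fun i _ => Finset.sum_eq_zero fun j _ =>
      Finset.sum_eq_zero fun j' _ => ?_
    split
    · rename_i hlt
      obtain ⟨j0, hj0, hun⟩ := huniq i
      by_cases hj : l i j = true
      · by_cases hj' : l i j' = true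
        · exact absurd ((hun j hj).trans (hun j' hj').symm) hlt.ne
        · have hf : l i j' = false := by cases h : l i j' <;> simp_all
          simp [ind, hf]
      · have hf : l i j = false := by cases h : l i j <;> simp_all
        simp [ind, hf]
    · rfl
  have h3 : ∑ i, ∑ j, ∑ i', ∑ j',
      (if i < i' ∧ (f i j).1 = (f i' j').1 ∧ (f i j).2 ≠ (f i' j').2
       then ind (l i j) * ind (l i' j') else 0) = (0:ℝ) := by
    refine Finset.sum_eq_zero fun i _ => Finset.sum_eq_zero fun j _ =>
      Finset.sum_eq_zero fun i' _ => Finset.sum_eq_zero fun j' _ => ?_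
    split
    · rename_i hcond
      by_cases hj : l i j = true
      · by_cases hj' : l i' j' = true
        · exact absurd (hconf i j i' j' hj hj' hcond.2.1 hcond.2.2) (fun h => h)
        · have hf : l i' j' = false := by cases h : l i' j' <;> simp_all
          simp [ind, hf]
      · have hf : l i j = false := by cases h : l i j <;> simp_all
        simp [ind, hf]
    · rfl
  unfold choiQUBO
  rw [h1, h2, h3]
  ring

/-- With `δ > ω > 0`, a `k`-CNF formula with `n` clauses is satisfiable iff the
minimum of Choi's QUBO is `-n·ω`, attained by a selection picking exactly one
literal from each clause, with no two selected occurrences in conflict. -/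
theorem choi_strict_correct {V : Type*} [DecidableEq V] (n k : ℕ)
    (f : Fin n → Fin k → V × Bool) (ω δ : ℝ) (hω : 0 < ω) (hδ : ω < δ) :
    (∃ x, Satisfies f x) ↔
      (IsLeast (Set.range (choiQUBO n k f ω δ)) (-(n : ℝ) * ω) ∧
       ∃ l : Fin n → Fin k → Bool,
         choiQUBO n k f ω δ l = -(n : ℝ) * ω ∧
         (∀ i, ∃! j, l i j = true) ∧
         (∀ i j i' j', l i j = true → l i' j' = true →
           (f i j).1 = (f i' j').1 → (f i j).2 ≠ (f i' j').2 → False)) := by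
  classical
  constructor
  · rintro ⟨x, hx⟩
    set c : Fin n → Fin k := fun i => (hx i).choose with hc
    have hcs : ∀ i, x (f i (c i)).1 = (f i (c i)).2 := fun i => (hx i).choose_spec
    set l : Fin n → Fin k → Bool := fun i j => decide (j = c i) with hl
    have huniq : ∀ i, ∃! j, l i j = true := by
      intro i
      refine ⟨c i, by simp [hl], fun j hj => by simpa [hl] using hj⟩
    have hconf : ∀ i j i' j', l i j = true → l i' j' = true →
        (f i j).1 = (f i' j').1 → (f i j).2 ≠ (f i' j').2 → False := by
      intro i j i' j' h h' hv hp
      have hj : j = c i := by simpa [hl] using h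
      have hj' : j' = c i' := by simpa [hl] using h'
      subst hj; subst hj'
      have e1 := hcs i
      have e2 := hcs i'
      rw [hv] at e1
      exact hp (e1.symm.trans e2)
    have hval := choi_val n k f ω δ l huniq hconf
    refine ⟨⟨⟨l, hval⟩, ?_⟩, l, hval, huniq, hconf⟩
    rintro y ⟨l', rfl⟩
    exact choi_lb n k f ω δ hω hδ l'
  · rintro ⟨-, l, -, huniq, hconf⟩
    set x : V → Bool := fun v =>
      if ∃ i j, l i j = true ∧ (f i j).1 = v ∧ (f i j).2 = true then true else false with hxdef
    refine ⟨x, fun i => ?_⟩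
    obtain ⟨j, hj, -⟩ := huniq i
    refine ⟨j, ?_⟩
    cases hp : (f i j).2
    · rw [hxdef]
      simp only
      rw [if_neg]
      rintro ⟨i', j', h1, h2, h3⟩
      exact hconf i j i' j' hj h1 h2.symm (by rw [hp, h3]; simp)
    · rw [hxdef]
      simp only
      rw [if_pos ⟨i, j, hj, rfl, hp⟩]
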